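/- arXiv:1606.09312 — 6 statements merged into one kernel-verified Lean document; each statement's English description precedes it below -/
import Mathlib

section
/- Let q : ℕ → ℤ be defined by q(1)=1, q(2)=2, q(3)=3, q(4)=4, q(5)=5, q(6)=7, q(7)=9, and q(n+1) = q(n-1) + q(n-2) for n ≥ 7. Then for all n ≥ 6, q(n+1) = q(n) + q(n-4). -/
/-!
The recurrence `q (n + 1) = q (n - 1) + q (n - 2)` has characteristic polynomial `x ^ 3 - x - 1`,
which divides `x ^ 5 - x ^ 4 - 1 = (x ^ 3 - x - 1) * (x ^ 2 - x + 1)`. So every solution of the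
short recurrence satisfies the long one, without induction; only the three initial values
`n = 6, 7, 8`, where the short recurrence does not yet reach, are checked by hand.
-/

theorem add_five_eq_add_four_add_of_add_three {G : Type*} [AddCommSemigroup G] {f : ℕ → G}
    {N : ℕ} (hf : ∀ n ≥ N, f (n + 3) = f (n + 1) + f n) {n : ℕ} (hn : N ≤ n) :
    f (n + 5) = f (n + 4) + f n :=
  calc f (n + 5) = f (n + 3) + f (n + 2) := hf (n + 2) (by omega)
    _ = f (n + 2) + f (n + 1) + f n := by rw [hf n hn, add_comm, add_assoc]
    _ = f (n + 4) + f n := by rw [hf (n + 1) (by omega)]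

theorem stmt_0_general (q : ℕ → ℤ)
    (h2 : q 2 = 2) (h3 : q 3 = 3) (h4 : q 4 = 4)
    (h5 : q 5 = 5) (h6 : q 6 = 7) (h7 : q 7 = 9)
    (hrec : ∀ n ≥ 7, q (n + 1) = q (n - 1) + q (n - 2)) :
    ∀ n ≥ 6, q (n + 1) = q n + q (n - 4) := by
  have hshort : ∀ n ≥ 5, q (n + 3) = q (n + 1) + q n := fun n hn => by
    simpa using hrec (n + 2) (by omega)
  have h8 : q 8 = 12 := by simpa [h5, h6] using hshort 5 le_rfl
  have h9 : q 9 = 16 := by simpa [h6, h7] using hshort 6 (by norm_num)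
  intro n hn
  obtain hsmall | hlarge : n ≤ 8 ∨ 9 ≤ n := by omega
  · interval_cases n <;> simp [*]
  · obtain ⟨k, rfl⟩ : ∃ k, n = k + 4 := ⟨n - 4, by omega⟩
    simpa using add_five_eq_add_four_add_of_add_three hshort (show 5 ≤ k by omega)

theorem stmt_0 (q : ℕ → ℤ)
    (h1 : q 1 = 1) (h2 : q 2 = 2) (h3 : q 3 = 3) (h4 : q 4 = 4)
    (h5 : q 5 = 5) (h6 : q 6 = 7) (h7 : q 7 = 9)
    (hrec : ∀ n ≥ 7, q (n + 1) = q (n - 1) + q (n - 2)) :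
    ∀ n ≥ 6, q (n + 1) = q n + q (n - 4) :=
  stmt_0_general q h2 h3 h4 h5 h6 h7 hrec
end

section
/- Let q : ℕ → ℤ be the Fibonacci Quilt sequence (q(1)=1, q(2)=2, q(3)=3, q(4)=4, q(5)=5, q(6)=7, q(7)=9, q(n+1)=q(n-1)+q(n-2) for n ≥ 7). Then for all n ≥ 1, ∑_{i=1}^{n} q(i) = q(n+5) - 6. -/
/-! Three steps of the recurrence give `q (i + 5) = q (i + 4) + q i` for `i ≥ 2` (for `i < 5` by
the initial values), so `q i = q (i + 5) - q (i + 4)` and the sum telescopes to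
`q (n + 5) - q 6 + q 1`. -/

section
variable {M : Type*} [AddCommMonoid M] (q : ℕ → M)

theorem add_five_eq_add_four_add_of_recurrence
    (hrec : ∀ n ≥ 7, q (n + 1) = q (n - 1) + q (n - 2)) :
    ∀ i ≥ 5, q (i + 5) = q (i + 4) + q i := by
  intro i hi
  have h5 : q (i + 5) = q (i + 3) + q (i + 2) := hrec (i + 4) (by omega)
  have h4 : q (i + 4) = q (i + 2) + q (i + 1) := hrec (i + 3) (by omega)
  have h3 : q (i + 3) = q (i + 1) + q i := hrec (i + 2) (by omega)
  rw [h5, h4, h3]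
  abel

theorem add_sum_Icc_eq_of_add_five (h : ∀ i ≥ 2, q (i + 5) = q (i + 4) + q i) :
    ∀ n ≥ 1, q 6 + ∑ i ∈ Finset.Icc 1 n, q i = q (n + 5) + q 1 := by
  intro n hn
  induction n, hn using Nat.le_induction with
  | base => simp
  | succ n hn ih =>
    rw [Finset.sum_Icc_succ_top (by omega), ← add_assoc, ih, h (n + 1) (by omega),
      add_right_comm]

end

theorem stmt_1 (q : ℕ → ℤ)
    (h1 : q 1 = 1) (h2 : q 2 = 2) (h3 : q 3 = 3) (h4 : q 4 = 4)
    (h5 : q 5 = 5) (h6 : q 6 = 7) (h7 : q 7 = 9)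
    (hrec : ∀ n ≥ 7, q (n + 1) = q (n - 1) + q (n - 2)) :
    ∀ n ≥ 1, ∑ i ∈ Finset.Icc 1 n, q i = q (n + 5) - 6 := by
  have h8 : q 8 = 12 := by simpa [h6, h5] using hrec 7 le_rfl
  have h9 : q 9 = 16 := by simpa [h7, h6] using hrec 8 (by norm_num)
  have hshift : ∀ i ≥ 2, q (i + 5) = q (i + 4) + q i := by
    intro i hi
    obtain rfl | rfl | rfl | hi : i = 2 ∨ i = 3 ∨ i = 4 ∨ 5 ≤ i := by omega
    · rw [h7, h6, h2]; rfl
    · rw [h8, h7, h3]; rfl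
    · rw [h9, h8, h4]; rfl
    · exact add_five_eq_add_four_add_of_recurrence q hrec i hi
  intro n hn
  linarith [add_sum_Icc_eq_of_add_five q hshift n hn]
end

section
/- Let q be the Fibonacci Quilt sequence. For all n ≥ 10, q(n) + q(n-3) = q(n+1) + q(n-8). -/
/-!
On the Fibonacci Quilt sequence, the recurrence `q (n + 1) = q (n - 1) + q (n - 2)` extends
down to `n = 4`, so from index 2 on `q` obeys the Padovan recurrence. Every Padovan-type sequence
satisfies `p (k + 5) = p (k + 4) + p k`; applying this at `n - 4` and `n - 8` gives
`q (n + 1) = q n + q (n - 4)` and `q (n - 3) = q (n - 4) + q (n - 8)`, whose sum is the claim.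
-/

theorem add_five_eq_of_padovan {M : Type*} [AddCommMonoid M] (p : ℕ → M) (a : ℕ)
    (hp : ∀ k ≥ a, p (k + 3) = p (k + 1) + p k) :
    ∀ k ≥ a, p (k + 5) = p (k + 4) + p k := by
  intro k hk
  rw [hp (k + 2) (by omega), hp (k + 1) (by omega), hp k hk]
  abel

theorem quilt_padovan_recurrence (q : ℕ → ℤ)
    (h2 : q 2 = 2) (h3 : q 3 = 3) (h4 : q 4 = 4)
    (h5 : q 5 = 5) (h6 : q 6 = 7) (h7 : q 7 = 9)
    (hrec : ∀ n ≥ 7, q (n + 1) = q (n - 1) + q (n - 2)) :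
    ∀ k ≥ 2, q (k + 3) = q (k + 1) + q k := by
  intro k hk
  obtain hk | hk | hk | hk : k = 2 ∨ k = 3 ∨ k = 4 ∨ 5 ≤ k := by omega
  · subst hk; rw [h5, h3, h2]; norm_num
  · subst hk; rw [h6, h4, h3]; norm_num
  · subst hk; rw [h7, h5, h4]; norm_num
  · simpa using hrec (k + 2) (by omega)

theorem stmt_4_general (q : ℕ → ℤ)
    (h2 : q 2 = 2) (h3 : q 3 = 3) (h4 : q 4 = 4)
    (h5 : q 5 = 5) (h6 : q 6 = 7) (h7 : q 7 = 9)
    (hrec : ∀ n ≥ 7, q (n + 1) = q (n - 1) + q (n - 2)) :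
    ∀ n ≥ 10, q n + q (n - 3) = q (n + 1) + q (n - 8) := by
  intro n hn
  obtain ⟨j, rfl⟩ : ∃ j, n = j + 10 := ⟨n - 10, by omega⟩
  have hquilt := add_five_eq_of_padovan q 2 (quilt_padovan_recurrence q h2 h3 h4 h5 h6 h7 hrec)
  rw [show j + 10 - 3 = j + 2 + 5 by omega, show j + 10 - 8 = j + 2 by omega,
    show j + 10 + 1 = j + 6 + 5 by omega, hquilt (j + 6) (by omega), hquilt (j + 2) (by omega)]
  ring_nf

theorem stmt_4 (q : ℕ → ℤ)
    (h1 : q 1 = 1) (h2 : q 2 = 2) (h3 : q 3 = 3) (h4 : q 4 = 4)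
    (h5 : q 5 = 5) (h6 : q 6 = 7) (h7 : q 7 = 9)
    (hrec : ∀ n ≥ 7, q (n + 1) = q (n - 1) + q (n - 2)) :
    ∀ n ≥ 10, q n + q (n - 3) = q (n + 1) + q (n - 8) :=
  stmt_4_general q h2 h3 h4 h5 h6 h7 hrec
end

section
/- Let q be the Fibonacci Quilt sequence. For all k ≥ 0 and ℓ ≥ 1 + 5k, we have q(ℓ) + q(ℓ-5) + q(ℓ-10) + ⋯ + q(ℓ-5k) < q(ℓ+1). -/
/-!
By induction on `k`, using `q (ℓ + 1) = q ℓ + q (ℓ - 4)`: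
`q ℓ + (q (ℓ - 5) + ⋯ + q (ℓ - 5 k)) < q ℓ + q (ℓ - 4) = q (ℓ + 1)`,
the base case being that `q` is strictly increasing.
-/

section

variable (q : ℕ → ℤ)

theorem sum_range_sub_five_mul_lt (hstep : ∀ n ≥ 6, q (n + 1) = q n + q (n - 4))
    (hlt : ∀ n ≥ 1, q n < q (n + 1)) (k ℓ : ℕ) (hℓ : ℓ ≥ 1 + 5 * k) :
    ∑ i ∈ Finset.range (k + 1), q (ℓ - 5 * i) < q (ℓ + 1) := by
  induction k generalizing ℓ with
  | zero => simpa using hlt ℓ (by omega)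
  | succ k ih =>
    have htail : ∑ i ∈ Finset.range (k + 1), q (ℓ - 5 * (i + 1)) < q (ℓ - 4) := by
      have h := ih (ℓ - 5) (by omega)
      rw [show ℓ - 5 + 1 = ℓ - 4 by omega] at h
      convert h using 3 with i
      omega
    rw [Finset.sum_range_succ', hstep ℓ (by omega)]
    simp only [mul_zero, Nat.sub_zero]
    linarith

theorem pos_of_step (hstep : ∀ n ≥ 6, q (n + 1) = q n + q (n - 4))
    (hbase : ∀ n, 1 ≤ n → n ≤ 6 → 0 < q n) (n : ℕ) (hn : 1 ≤ n) : 0 < q n := by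
  induction n using Nat.strong_induction_on with
  | _ n ih =>
    rcases le_or_gt n 6 with hle | hgt
    · exact hbase n hn hle
    · obtain ⟨m, rfl⟩ : ∃ m, n = m + 1 := ⟨n - 1, by omega⟩
      rw [hstep m (by omega)]
      exact add_pos (ih m (by omega) (by omega)) (ih (m - 4) (by omega) (by omega))

theorem quilt_step (h2 : q 2 = 2) (h3 : q 3 = 3) (h4 : q 4 = 4) (h5 : q 5 = 5) (h6 : q 6 = 7)
    (h7 : q 7 = 9) (hrec : ∀ n ≥ 7, q (n + 1) = q (n - 1) + q (n - 2)) :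
    ∀ n ≥ 6, q (n + 1) = q n + q (n - 4) := by
  have h8 : q 8 = 12 := by rw [hrec 7 le_rfl]; simp [h6, h5]
  have h9 : q 9 = 16 := by rw [hrec 8 (by norm_num)]; simp [h7, h6]
  intro n hn
  match n, hn with
  | 6, _ => simp [h7, h6, h2]
  | 7, _ => simp [h8, h7, h3]
  | 8, _ => simp [h9, h8, h4]
  | m + 9, _ =>
    have e1 : q (m + 10) = q (m + 8) + q (m + 7) := hrec (m + 9) (by omega)
    have e2 : q (m + 9) = q (m + 7) + q (m + 6) := hrec (m + 8) (by omega)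
    have e3 : q (m + 8) = q (m + 6) + q (m + 5) := hrec (m + 7) (by omega)
    show q (m + 10) = q (m + 9) + q (m + 5)
    linarith

end

theorem stmt_5 (q : ℕ → ℤ)
    (h1 : q 1 = 1) (h2 : q 2 = 2) (h3 : q 3 = 3) (h4 : q 4 = 4)
    (h5 : q 5 = 5) (h6 : q 6 = 7) (h7 : q 7 = 9)
    (hrec : ∀ n ≥ 7, q (n + 1) = q (n - 1) + q (n - 2)) :
    ∀ k : ℕ, ∀ ℓ : ℕ, ℓ ≥ 1 + 5 * k →
      ∑ i ∈ Finset.range (k + 1), q (ℓ - 5 * i) < q (ℓ + 1) := by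
  have hstep := quilt_step q h2 h3 h4 h5 h6 h7 hrec
  have hpos := pos_of_step q hstep fun n hn hn6 => by interval_cases n <;> simp [*]
  have hlt : ∀ n ≥ 1, q n < q (n + 1) := by
    intro n hn
    rcases le_or_gt 6 n with h | h
    · rw [hstep n h]
      linarith [hpos (n - 4) (by omega)]
    · interval_cases n <;> simp [*]
  exact sum_range_sub_five_mul_lt q hstep hlt
end

section
/- Let r be the unique positive real root of y^{s+1} - y^s - b = 0, where s, b ≥ 1 are integers. Then r strictly exceeds the absolute value of every other complex root of this polynomial. -/
/-! Write the equation as `z ^ s * (z - 1) = b`. Since `t ↦ t ^ s * (t - 1)` is strictly increasing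
on `[1, ∞)` and `‖z‖ - 1 ≤ ‖z - 1‖`, any root with `‖z‖ ≥ 1` satisfies
`‖z‖ ^ s * (‖z‖ - 1) ≤ b = r ^ s * (r - 1)`, hence `‖z‖ ≤ r`. Equality forces
`‖z - 1‖ = ‖z‖ - 1`, which only happens on the ray `[0, ∞)`, so then `z = ‖z‖ = r`. -/

open Complex

lemma strictMonoOn_pow_mul_sub_one (s : ℕ) :
    StrictMonoOn (fun t : ℝ => t ^ s * (t - 1)) (Set.Ici 1) := by
  intro a (ha : 1 ≤ a) c (hc : 1 ≤ c) hac
  calc a ^ s * (a - 1) ≤ c ^ s * (a - 1) :=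
        mul_le_mul_of_nonneg_right (pow_le_pow_left₀ (by linarith) hac.le s) (by linarith)
    _ < c ^ s * (c - 1) := mul_lt_mul_of_pos_left (by linarith) (pow_pos (by linarith) s)

lemma Complex.eq_norm_of_norm_sub_one_eq {z : ℂ} (h : ‖z - 1‖ = ‖z‖ - 1) : z = ‖z‖ := by
  have hnonneg : 0 ≤ ‖z‖ - 1 := h ▸ norm_nonneg _
  have harg : z.arg = 0 := by
    have habs : ‖z - 1‖ = |‖z‖ - ‖(1 : ℂ)‖| := by rw [norm_one, abs_of_nonneg hnonneg, h]
    rcases norm_sub_eq_iff.mp habs with rfl | h1 | harg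
    · exact arg_zero
    · exact absurd h1 one_ne_zero
    · rwa [arg_one] at harg
  calc z = ‖z‖ * exp (z.arg * I) := (norm_mul_exp_arg_mul_I z).symm
    _ = ‖z‖ := by simp [harg]

lemma Complex.norm_lt_of_pow_mul_sub_one_eq {s : ℕ} {r : ℝ} (hr : 1 ≤ r) {z : ℂ}
    (hz : z ^ s * (z - 1) = ((r ^ s * (r - 1) : ℝ) : ℂ)) (hne : z ≠ r) : ‖z‖ < r := by
  rcases lt_or_ge ‖z‖ 1 with hz1 | hz1
  · linarith
  have hnorm : ‖z‖ ^ s * ‖z - 1‖ = r ^ s * (r - 1) := by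
    rw [← norm_pow, ← norm_mul, hz, norm_real, Real.norm_of_nonneg
      (mul_nonneg (by positivity) (by linarith))]
  have hlower : ‖z‖ ^ s * (‖z‖ - 1) ≤ ‖z‖ ^ s * ‖z - 1‖ :=
    mul_le_mul_of_nonneg_left (by simpa using norm_sub_norm_le z 1) (by positivity)
  have hle : ‖z‖ ≤ r :=
    ((strictMonoOn_pow_mul_sub_one s).le_iff_le hz1 hr).mp (hlower.trans hnorm.le)
  refine hle.lt_of_ne fun heq => hne ?_
  rw [heq] at hnorm
  have hsub : ‖z - 1‖ = ‖z‖ - 1 := by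
    rw [heq]; exact mul_left_cancel₀ (pow_pos (by linarith) s).ne' hnorm
  rw [eq_norm_of_norm_sub_one_eq hsub, heq]

theorem stmt_8_general (s b : ℕ) (r : ℝ)
    (hr : 0 < r) (hroot : r ^ (s + 1) - r ^ s - (b : ℝ) = 0) :
    ∀ z : ℂ, z ^ (s + 1) - z ^ s - (b : ℂ) = 0 → z ≠ (r : ℂ) → ‖z‖ < r := by
  intro z hz hne
  have hb : r ^ s * (r - 1) = b := by linear_combination hroot
  have hr1 : 1 ≤ r := by
    have : 0 ≤ r - 1 := nonneg_of_mul_nonneg_right (hb ▸ b.cast_nonneg) (pow_pos hr s)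
    linarith
  refine norm_lt_of_pow_mul_sub_one_eq (s := s) hr1 ?_ hne
  rw [hb]
  push_cast
  linear_combination hz

theorem stmt_8 (s b : ℕ) (hs : 1 ≤ s) (hb : 1 ≤ b) (r : ℝ)
    (hr : 0 < r) (hroot : r ^ (s + 1) - r ^ s - (b : ℝ) = 0) :
    ∀ z : ℂ, z ^ (s + 1) - z ^ s - (b : ℂ) = 0 → z ≠ (r : ℂ) → ‖z‖ < r :=
  stmt_8_general s b r hr hroot
end

section
/- Let g : ℕ → ℤ satisfy g(k) = k + 1 for 1 ≤ k ≤ 5 and g(n) = g(n-1) + g(n-5) for n ≥ 6. Then g(n) ≥ 2^{⌊(n-1)/5⌋} for all n ≥ 1. -/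
/-! The recurrence keeps `g` positive, hence nondecreasing from index 1, so
`g (n + 5) = g (n + 4) + g n ≥ 2 * g n`: `g` at least doubles every five steps. -/

theorem pow_div_le_of_mul_le_add {R : Type*} [Semiring R] [PartialOrder R] [IsOrderedRing R]
    (u : ℕ → R) {c : R} (hc : 0 ≤ c) {k : ℕ} (hk : 0 < k)
    (hbase : ∀ n < k, 1 ≤ u n) (hstep : ∀ n, c * u n ≤ u (n + k)) (n : ℕ) :
    c ^ (n / k) ≤ u n := by
  induction n using Nat.strong_induction_on with
  | _ n ih =>
    rcases lt_or_ge n k with hn | hn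
    · simpa [Nat.div_eq_of_lt hn] using hbase n hn
    · obtain ⟨m, rfl⟩ := Nat.exists_eq_add_of_le' hn
      calc c ^ ((m + k) / k) = c * c ^ (m / k) := by
            rw [Nat.add_div_right m hk, pow_succ']
        _ ≤ c * u m := mul_le_mul_of_nonneg_left (ih m (by omega)) hc
        _ ≤ u (m + k) := hstep m

section FibonacciQuilt

variable {g : ℕ → ℤ} (hinit : ∀ k, 1 ≤ k → k ≤ 5 → g k = k + 1)
  (hrec : ∀ n ≥ 6, g n = g (n - 1) + g (n - 5))
include hinit hrec

theorem one_le_of_quilt_rec : ∀ n ≥ 1, 1 ≤ g n := by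
  intro n
  induction n using Nat.strong_induction_on with
  | _ n ih =>
    intro hn
    rcases le_or_gt n 5 with h5 | h5
    · rw [hinit n hn h5]
      omega
    · have hprev := ih (n - 1) (by omega) (by omega)
      have hlag := ih (n - 5) (by omega) (by omega)
      rw [hrec n h5]
      omega

theorem monotone_shift_of_quilt_rec : Monotone fun n ↦ g (n + 1) := by
  refine monotone_nat_of_le_succ fun n ↦ ?_
  rcases le_or_gt (n + 2) 5 with h5 | h5
  · rw [hinit (n + 1) (by omega) (by omega), hinit (n + 2) (by omega) h5]
    omega
  · have hpos := one_le_of_quilt_rec hinit hrec (n + 2 - 5) (by omega)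
    rw [hrec (n + 2) h5, show n + 2 - 1 = n + 1 from rfl]
    omega

end FibonacciQuilt

theorem stmt_12 (g : ℕ → ℤ)
    (hinit : ∀ k, 1 ≤ k → k ≤ 5 → g k = k + 1)
    (hrec : ∀ n ≥ 6, g n = g (n - 1) + g (n - 5)) :
    ∀ n ≥ 1, g n ≥ 2 ^ ((n - 1) / 5) := by
  have hbase : ∀ n < 5, 1 ≤ g (n + 1) := fun n hn ↦
    one_le_of_quilt_rec hinit hrec (n + 1) (by omega)
  have hstep : ∀ n, 2 * g (n + 1) ≤ g (n + 1 + 5) := fun n ↦ by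
    have hmono : g (n + 1) ≤ g (n + 4 + 1) :=
      monotone_shift_of_quilt_rec hinit hrec (Nat.le_add_right n 4)
    rw [hrec (n + 1 + 5) (by omega), show n + 1 + 5 - 1 = n + 4 + 1 by omega, Nat.add_sub_cancel]
    omega
  intro n hn
  obtain ⟨m, rfl⟩ := Nat.exists_eq_add_of_le' hn
  simpa using pow_div_le_of_mul_le_add (fun n ↦ g (n + 1)) zero_le_two (by norm_num) hbase hstep m
end
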